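/- arXiv:1312.5487 — 7 statements merged into one kernel-verified Lean document; each statement's English description precedes it below -/
import Mathlib

section
/- Define a relation ⪯ on n×n matrices over ℕ by A ⪯ B if and only if B_{NE,s,t} ≤ A_{NE,s,t} and B_{SW,s,t} ≤ A_{SW,s,t} for all s, t ∈ {1,…,n}. Then ⪯ is reflexive and transitive, and it is antisymmetric on the set of matrices with a fixed row-sum vector and a fixed column-sum vector (i.e., if A ⪯ B and B ⪯ A with ro(A) = ro(B) and co(A) = co(B), then A = B). -/
open Finset

def NEf {n : ℕ} (A : Matrix (Fin n) (Fin n) ℕ) (s t : Fin n) : ℕ :=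
  ∑ x : Fin n, ∑ y : Fin n, if x ≤ s ∧ t ≤ y then A x y else 0

def SWf {n : ℕ} (A : Matrix (Fin n) (Fin n) ℕ) (s t : Fin n) : ℕ :=
  ∑ x : Fin n, ∑ y : Fin n, if s ≤ x ∧ y ≤ t then A x y else 0

/-- `A ⪯ B` iff all NE and SW corner sums of `B` are bounded by those of `A`. -/
def Deg {n : ℕ} (A B : Matrix (Fin n) (Fin n) ℕ) : Prop :=
  ∀ s t : Fin n, NEf B s t ≤ NEf A s t ∧ SWf B s t ≤ SWf A s t

/-! The NE corner sum `NEf A s t` is a partial sum over `Iic s` of the row tails over `Ici t`,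
and over a well-founded order partial sums determine the summand, so the NE corner sums alone
determine the matrix. -/

section PartialSums

variable {α M : Type*} [PartialOrder α] [AddCancelCommMonoid M] {f g : α → M}

theorem Finset.eq_of_sum_Iic_eq [LocallyFiniteOrderBot α] [WellFoundedLT α]
    (h : ∀ s, ∑ x ∈ Iic s, f x = ∑ x ∈ Iic s, g x) : f = g := by
  funext s
  induction s using WellFoundedLT.induction with
  | _ s ih =>
    have hs := h s
    rw [Iic_eq_cons_Iio, sum_cons, sum_cons, sum_congr rfl fun x hx => ih x (mem_Iio.1 hx)] at hs
    exact add_right_cancel hs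

theorem Finset.eq_of_sum_Ici_eq [LocallyFiniteOrderTop α] [WellFoundedGT α]
    (h : ∀ t, ∑ y ∈ Ici t, f y = ∑ y ∈ Ici t, g y) : f = g := by
  have hdual := eq_of_sum_Iic_eq (α := αᵒᵈ) (f := f ∘ OrderDual.ofDual) (g := g ∘ OrderDual.ofDual)
    fun t => by
      rw [← OrderDual.toDual_ofDual t, Iic_toDual, sum_map, sum_map]
      exact h _
  exact funext fun y => congrFun hdual (OrderDual.toDual y)

end PartialSums

theorem NEf_eq_sum_Iic_Ici {n : ℕ} (A : Matrix (Fin n) (Fin n) ℕ) (s t : Fin n) :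
    NEf A s t = ∑ x ∈ Iic s, ∑ y ∈ Ici t, A x y := by
  simp only [NEf, ite_and, sum_ite_irrel, sum_const_zero, ← sum_filter, filter_ge_eq_Iic,
    filter_le_eq_Ici]

theorem Matrix.eq_of_NEf_eq {n : ℕ} {A B : Matrix (Fin n) (Fin n) ℕ}
    (h : ∀ s t, NEf A s t = NEf B s t) : A = B := by
  have hrow : ∀ t x, ∑ y ∈ Ici t, A x y = ∑ y ∈ Ici t, B x y := fun t =>
    congrFun (eq_of_sum_Iic_eq fun s => by simpa only [NEf_eq_sum_Iic_Ici] using h s t)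
  exact funext fun x => eq_of_sum_Ici_eq fun t => hrow t x

namespace Deg

variable {n : ℕ} {A B C : Matrix (Fin n) (Fin n) ℕ}

theorem refl (A : Matrix (Fin n) (Fin n) ℕ) : Deg A A :=
  fun _ _ => ⟨le_rfl, le_rfl⟩

theorem trans (hAB : Deg A B) (hBC : Deg B C) : Deg A C :=
  fun s t => ⟨(hBC s t).1.trans (hAB s t).1, (hBC s t).2.trans (hAB s t).2⟩

theorem antisymm (hAB : Deg A B) (hBA : Deg B A) : A = B :=
  Matrix.eq_of_NEf_eq fun s t => le_antisymm (hBA s t).1 (hAB s t).1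

end Deg

theorem stmt2 {n : ℕ} :
    (∀ A : Matrix (Fin n) (Fin n) ℕ, Deg A A) ∧
    (∀ A B C : Matrix (Fin n) (Fin n) ℕ, Deg A B → Deg B C → Deg A C) ∧
    (∀ A B : Matrix (Fin n) (Fin n) ℕ, Deg A B → Deg B A →
      (∀ i, ∑ j, A i j = ∑ j, B i j) → (∀ i, ∑ j, A j i = ∑ j, B j i) → A = B) :=
  ⟨Deg.refl, fun _ _ _ => Deg.trans, fun _ _ hAB hBA _ _ => hAB.antisymm hBA⟩
end

section
/- Call an n×n matrix A over ℕ generic if for every pair of rows i < k and every pair of columns j < l, at least one of the two diagonal entries a_{ij}, a_{kl} of the corresponding 2×2 submatrix is zero. If A is generic and its row-sum vector equals its column-sum vector, then A is symmetric: a_{ij} = a_{ji} for all i, j. -/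
/-!
Write `NE(a, b)` for the sum of the entries of `A` in rows `< a` and columns `≥ b`, and `NEᵀ` for
the same sum for `Aᵀ`. For `a ≤ b`, genericity forces one of the two strips `rows < a, a ≤ cols < b`
and `a ≤ rows < b, cols ≥ b` to vanish, since a nonzero entry in each would give a forbidden pair.
Together with `NE(m, m) = NEᵀ(m, m)`, which is the equality of row and column sums over the first
`m` indices, this yields `NE(a, b) = NEᵀ(a, b)` whenever `a ≤ b`. For `i < j` the entry `A i j` is
an alternating sum of `NE` at the four corners `(i, j), (i + 1, j), (i, j + 1), (i + 1, j + 1)`,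
all with `a ≤ b`, and the same sum of `NEᵀ` is `A j i`.
-/

open Finset

/-- A matrix is generic if every 2×2 submatrix has a zero main-diagonal entry. -/
def Generic {n : ℕ} (A : Matrix (Fin n) (Fin n) ℕ) : Prop :=
  ∀ i k j l : Fin n, i < k → j < l → A i j = 0 ∨ A k l = 0

open Matrix

variable {n : ℕ}

theorem Generic.transpose {A : Matrix (Fin n) (Fin n) ℕ} (hA : Generic A) : Generic Aᵀ :=
  fun i k j l hik hjl => hA j l i k hjl hik

def blockSum (A : Matrix (Fin n) (Fin n) ℕ) (P : Fin n → Fin n → Prop) [DecidableRel P] : ℕ :=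
  ∑ k, ∑ l, if P k l then A k l else 0

section blockSum

variable (A : Matrix (Fin n) (Fin n) ℕ)

theorem blockSum_eq_add {P Q R : Fin n → Fin n → Prop} [DecidableRel P] [DecidableRel Q]
    [DecidableRel R] (hP : ∀ k l, P k l ↔ Q k l ∨ R k l) (hQR : ∀ k l, Q k l → ¬R k l) :
    blockSum A P = blockSum A Q + blockSum A R := by
  simp only [blockSum, ← sum_add_distrib]
  refine sum_congr rfl fun k _ => sum_congr rfl fun l _ => ?_
  have := hP k l
  have := hQR k l
  split_ifs <;> grind

theorem blockSum_transpose {P Q : Fin n → Fin n → Prop} [DecidableRel P] [DecidableRel Q]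
    (h : ∀ k l, Q k l ↔ P l k) : blockSum Aᵀ P = blockSum A Q := by
  simp only [blockSum, transpose_apply, h]
  exact sum_comm

theorem blockSum_entry (i j : Fin n) :
    blockSum A (fun k l => k.val = i.val ∧ l.val = j.val) = A i j := by
  simp [blockSum, Fin.val_inj, ite_and]

theorem exists_ne_zero_of_blockSum_ne_zero {P : Fin n → Fin n → Prop} [DecidableRel P]
    (h : blockSum A P ≠ 0) : ∃ k l, P k l ∧ A k l ≠ 0 := by
  obtain ⟨k, -, hk⟩ := exists_ne_zero_of_sum_ne_zero h
  obtain ⟨l, -, hl⟩ := exists_ne_zero_of_sum_ne_zero hk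
  exact ⟨k, l, ite_ne_right_iff.mp hl⟩

theorem blockSum_rows_transpose (h : ∀ i, ∑ j, A i j = ∑ j, A j i) (m : ℕ) :
    blockSum Aᵀ (fun k _ => k.val < m) = blockSum A (fun k _ => k.val < m) := by
  refine sum_congr rfl fun k _ => ?_
  by_cases hk : k.val < m <;> simp [hk, h k]

end blockSum

def northeastSum (A : Matrix (Fin n) (Fin n) ℕ) (a b : ℕ) : ℕ :=
  blockSum A fun k l => k.val < a ∧ b ≤ l.val

section northeastSum

variable (A : Matrix (Fin n) (Fin n) ℕ)

theorem northeastSum_diag_transpose (h : ∀ i, ∑ j, A i j = ∑ j, A j i) (m : ℕ) :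
    northeastSum Aᵀ m m = northeastSum A m m := by
  have hRows := blockSum_eq_add A (P := fun k _ => k.val < m)
    (Q := fun k l => k.val < m ∧ l.val < m) (R := fun k l => k.val < m ∧ m ≤ l.val)
    (fun _ _ => by omega) (fun _ _ => by omega)
  have hRowsT := blockSum_eq_add Aᵀ (P := fun k _ => k.val < m)
    (Q := fun k l => k.val < m ∧ l.val < m) (R := fun k l => k.val < m ∧ m ≤ l.val)
    (fun _ _ => by omega) (fun _ _ => by omega)
  have hNW : blockSum Aᵀ (fun k l => k.val < m ∧ l.val < m) =
      blockSum A (fun k l => k.val < m ∧ l.val < m) :=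
    blockSum_transpose A fun _ _ => and_comm
  have hRowSums := blockSum_rows_transpose A h m
  unfold northeastSum
  omega

theorem northeastSum_eq_add_left {a b : ℕ} (hab : a ≤ b) :
    northeastSum A a a =
      northeastSum A a b + blockSum A (fun k l => k.val < a ∧ a ≤ l.val ∧ l.val < b) :=
  blockSum_eq_add A (fun _ _ => by omega) (fun _ _ => by omega)

theorem northeastSum_eq_add_right {a b : ℕ} (hab : a ≤ b) :
    northeastSum A b b =
      northeastSum A a b + blockSum A (fun k l => a ≤ k.val ∧ k.val < b ∧ b ≤ l.val) :=
  blockSum_eq_add A (fun _ _ => by omega) (fun _ _ => by omega)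

theorem Generic.strip_eq_zero_or_strip_eq_zero {A : Matrix (Fin n) (Fin n) ℕ} (hA : Generic A)
    (a b : ℕ) :
    blockSum A (fun k l => k.val < a ∧ a ≤ l.val ∧ l.val < b) = 0 ∨
      blockSum A (fun k l => a ≤ k.val ∧ k.val < b ∧ b ≤ l.val) = 0 := by
  by_contra! hne
  obtain ⟨k, l, hkl, hA₁⟩ := exists_ne_zero_of_blockSum_ne_zero A hne.1
  obtain ⟨k', l', hkl', hA₂⟩ := exists_ne_zero_of_blockSum_ne_zero A hne.2
  have hk : k < k' := Fin.lt_def.mpr (by omega)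
  have hl : l < l' := Fin.lt_def.mpr (by omega)
  exact (hA k k' l l' hk hl).elim hA₁ hA₂

theorem northeastSum_transpose_of_le (hA : Generic A) (h : ∀ i, ∑ j, A i j = ∑ j, A j i)
    {a b : ℕ} (hab : a ≤ b) : northeastSum Aᵀ a b = northeastSum A a b := by
  have := northeastSum_eq_add_left A hab
  have := northeastSum_eq_add_right A hab
  have := northeastSum_eq_add_left Aᵀ hab
  have := northeastSum_eq_add_right Aᵀ hab
  have := hA.strip_eq_zero_or_strip_eq_zero a b
  have := hA.transpose.strip_eq_zero_or_strip_eq_zero a b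
  have := northeastSum_diag_transpose A h a
  have := northeastSum_diag_transpose A h b
  omega

theorem northeastSum_add_northeastSum (i j : Fin n) :
    northeastSum A (i.val + 1) j.val + northeastSum A i.val (j.val + 1) =
      northeastSum A i.val j.val + northeastSum A (i.val + 1) (j.val + 1) + A i j := by
  have hRow := blockSum_eq_add A (P := fun k l => k.val = i.val ∧ j.val ≤ l.val)
    (Q := fun k l => k.val = i.val ∧ l.val = j.val)
    (R := fun k l => k.val = i.val ∧ j.val + 1 ≤ l.val) (fun _ _ => by omega) (fun _ _ => by omega)
  have hSplit := blockSum_eq_add A (P := fun k l => k.val < i.val + 1 ∧ j.val ≤ l.val)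
    (Q := fun k l => k.val < i.val ∧ j.val ≤ l.val)
    (R := fun k l => k.val = i.val ∧ j.val ≤ l.val) (fun _ _ => by omega) (fun _ _ => by omega)
  have hSplitSucc := blockSum_eq_add A (P := fun k l => k.val < i.val + 1 ∧ j.val + 1 ≤ l.val)
    (Q := fun k l => k.val < i.val ∧ j.val + 1 ≤ l.val)
    (R := fun k l => k.val = i.val ∧ j.val + 1 ≤ l.val) (fun _ _ => by omega) (fun _ _ => by omega)
  rw [blockSum_entry] at hRow
  unfold northeastSum
  omega

end northeastSum

theorem Generic.apply_eq_apply_of_lt {A : Matrix (Fin n) (Fin n) ℕ} (hA : Generic A)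
    (h : ∀ i, ∑ j, A i j = ∑ j, A j i) {i j : Fin n} (hij : i < j) : A i j = A j i := by
  have hij : i.val < j.val := hij
  have hEntry := northeastSum_add_northeastSum A i j
  have hEntryT := northeastSum_add_northeastSum Aᵀ i j
  rw [transpose_apply] at hEntryT
  have := northeastSum_transpose_of_le A hA h (a := i.val + 1) (b := j.val) (by omega)
  have := northeastSum_transpose_of_le A hA h (a := i.val) (b := j.val + 1) (by omega)
  have := northeastSum_transpose_of_le A hA h (a := i.val) (b := j.val) (by omega)
  have := northeastSum_transpose_of_le A hA h (a := i.val + 1) (b := j.val + 1) (by omega)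
  omega

theorem stmt3 {n : ℕ} (A : Matrix (Fin n) (Fin n) ℕ) (hA : Generic A)
    (h : ∀ i, ∑ j, A i j = ∑ j, A j i) :
    ∀ i j, A i j = A j i := by
  intro i j
  rcases lt_trichotomy i j with hij | rfl | hij
  · exact hA.apply_eq_apply_of_lt h hij
  · rfl
  · exact (hA.apply_eq_apply_of_lt h hij).symm
end

section
/- Let λ = (λ_1,…,λ_n) and μ = (μ_1,…,μ_n) be vectors of nonnegative integers with Σ_i λ_i = Σ_i μ_i = r. Then there exists exactly one generic n×n matrix A over ℕ with row-sum vector λ and column-sum vector μ. -/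
/-!
Put `L i = λ₁ + ⋯ + λᵢ` and `M j = μⱼ₊₁ + ⋯ + μₙ`. Existence: cut `[0, r)` into consecutive
intervals of lengths `λ₁, …, λₙ` (rows) and, in the opposite order, of lengths `μ₁, …, μₙ`
(columns), and let the `(i, j)` entry be the length of the overlap of row interval `i` with
column interval `j`. Since the row intervals move right and the column intervals move left,
the matrix is generic.

Uniqueness: genericity forces the block of rows `< i` and columns `< j`, or the block of rows
`≥ i` and columns `≥ j`, to vanish, so the sum of the entries in rows `< i` and columns `≥ j`
is `min (L i) (M j)`. These corner sums determine the matrix by inclusion–exclusion.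
-/

open Finset

open Function

theorem Nat.exists_lt_not_and_succ {p : ℕ → Prop} {m : ℕ} (h0 : ¬ p 0) (hm : p m) :
    ∃ k < m, ¬ p k ∧ p (k + 1) := by
  induction m with
  | zero => exact absurd hm h0
  | succ m ih =>
    by_cases h : p m
    · obtain ⟨k, hk, hpk⟩ := ih h
      exact ⟨k, by omega, hpk⟩
    · exact ⟨m, by omega, h, hm⟩

theorem Finset.sum_card_inter_of_pairwise_disjoint {ι α : Type*} [Fintype ι] [DecidableEq α]
    {s : Finset α} {t : ι → Finset α} (hdisj : Pairwise (Disjoint on t))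
    (hcov : ∀ x ∈ s, ∃ i, x ∈ t i) : ∑ i, #(s ∩ t i) = #s := by
  rw [← card_biUnion fun i _ j _ hij => (hdisj hij).mono inter_subset_right inter_subset_right,
    ← inter_biUnion, inter_eq_left.mpr]
  intro x hx
  simpa using hcov x hx

section PartialSums

variable {n : ℕ}

def partialSum (f : Fin n → ℕ) (i : ℕ) : ℕ := ∑ k : Fin n, if (k : ℕ) < i then f k else 0

def tailSum (f : Fin n → ℕ) (j : ℕ) : ℕ := ∑ k : Fin n, if j ≤ (k : ℕ) then f k else 0

variable (f : Fin n → ℕ)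

@[simp] theorem partialSum_zero : partialSum f 0 = 0 := by simp [partialSum]

@[simp] theorem partialSum_self : partialSum f n = ∑ k, f k := by simp [partialSum]

@[simp] theorem tailSum_zero : tailSum f 0 = ∑ k, f k := by simp [tailSum]

@[simp] theorem tailSum_self : tailSum f n = 0 := by simp [tailSum]

theorem partialSum_mono : Monotone (partialSum f) := fun _ _ h =>
  sum_le_sum fun k _ => by split_ifs <;> omega

theorem tailSum_anti : Antitone (tailSum f) := fun _ _ h =>
  sum_le_sum fun k _ => by split_ifs <;> omega

theorem partialSum_succ (i : Fin n) : partialSum f (i + 1) = partialSum f i + f i := by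
  have hsplit : ∀ k : Fin n, (if (k : ℕ) < i + 1 then f k else 0)
      = (if (k : ℕ) < i then f k else 0) + if k = i then f k else 0 := by
    intro k; have := Fin.val_eq_val k i; split_ifs <;> omega
  simp only [partialSum, hsplit, sum_add_distrib, sum_ite_eq', mem_univ, if_true]

theorem tailSum_eq_add_tailSum_succ (j : Fin n) : tailSum f j = f j + tailSum f (j + 1) := by
  have hsplit : ∀ k : Fin n, (if (j : ℕ) ≤ k then f k else 0)
      = (if k = j then f k else 0) + if (j : ℕ) + 1 ≤ k then f k else 0 := by
    intro k; have := Fin.val_eq_val k j; split_ifs <;> omega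
  simp only [tailSum, hsplit, sum_add_distrib, sum_ite_eq', mem_univ, if_true]

variable {f} {g : Fin n → ℕ}

theorem partialSum_le_sum (i : ℕ) : partialSum f i ≤ ∑ k, f k :=
  sum_le_sum fun k _ => by split_ifs <;> omega

theorem tailSum_le_sum (j : ℕ) : tailSum f j ≤ ∑ k, f k :=
  sum_le_sum fun k _ => by split_ifs <;> omega

theorem partialSum_le_partialSum (h : ∀ k, f k ≤ g k) (i : ℕ) : partialSum f i ≤ partialSum g i :=
  sum_le_sum fun k _ => by split_ifs <;> simp [h k]

theorem tailSum_le_tailSum (h : ∀ k, f k ≤ g k) (j : ℕ) : tailSum f j ≤ tailSum g j :=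
  sum_le_sum fun k _ => by split_ifs <;> simp [h k]

theorem partialSum_congr {i : ℕ} (h : ∀ k : Fin n, (k : ℕ) < i → f k = g k) :
    partialSum f i = partialSum g i :=
  sum_congr rfl fun k _ => by split_ifs with hk; exacts [h k hk, rfl]

theorem tailSum_congr {j : ℕ} (h : ∀ k : Fin n, j ≤ (k : ℕ) → f k = g k) :
    tailSum f j = tailSum g j :=
  sum_congr rfl fun k _ => by split_ifs with hk; exacts [h k hk, rfl]

theorem partialSum_eq_sum {i : ℕ} (h : ∀ k : Fin n, i ≤ (k : ℕ) → f k = 0) :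
    partialSum f i = ∑ k, f k :=
  sum_congr rfl fun k _ => by split_ifs with hk; exacts [rfl, (h k (by omega)).symm]

theorem tailSum_eq_sum {j : ℕ} (h : ∀ k : Fin n, (k : ℕ) < j → f k = 0) :
    tailSum f j = ∑ k, f k :=
  sum_congr rfl fun k _ => by split_ifs with hk; exacts [rfl, (h k (by omega)).symm]

end PartialSums

section CanonicalMatrix

variable {m n : ℕ} (lam : Fin m → ℕ) (mu : Fin n → ℕ)

def rowInterval (i : Fin m) : Finset ℕ := Ico (partialSum lam i) (partialSum lam (i + 1))

def colInterval (j : Fin n) : Finset ℕ := Ico (tailSum mu (j + 1)) (tailSum mu j)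

theorem card_rowInterval (i : Fin m) : #(rowInterval lam i) = lam i := by
  simp [rowInterval, partialSum_succ]

theorem card_colInterval (j : Fin n) : #(colInterval mu j) = mu j := by
  simp [colInterval, tailSum_eq_add_tailSum_succ]

theorem pairwise_disjoint_rowInterval : Pairwise (Disjoint on rowInterval lam) := by
  refine pairwise_disjoint_on _ |>.mpr fun i k hik => disjoint_left.mpr fun x hi hk => ?_
  have := partialSum_mono lam (show (i : ℕ) + 1 ≤ k from hik)
  simp only [rowInterval, mem_Ico] at hi hk
  omega

theorem pairwise_disjoint_colInterval : Pairwise (Disjoint on colInterval mu) := by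
  refine pairwise_disjoint_on _ |>.mpr fun j l hjl => disjoint_left.mpr fun x hj hl => ?_
  have := tailSum_anti mu (show (j : ℕ) + 1 ≤ l from hjl)
  simp only [colInterval, mem_Ico] at hj hl
  omega

theorem lt_sum_of_mem_rowInterval {x : ℕ} {i : Fin m} (hx : x ∈ rowInterval lam i) :
    x < ∑ k, lam k := by
  have := partialSum_mono lam (show (i : ℕ) + 1 ≤ m from i.isLt)
  simp only [rowInterval, mem_Ico, partialSum_self] at hx this
  omega

theorem lt_sum_of_mem_colInterval {x : ℕ} {j : Fin n} (hx : x ∈ colInterval mu j) :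
    x < ∑ k, mu k := by
  have := tailSum_anti mu (Nat.zero_le j)
  simp only [colInterval, mem_Ico, tailSum_zero] at hx this
  omega

theorem exists_mem_rowInterval {x : ℕ} (hx : x < ∑ k, lam k) : ∃ i, x ∈ rowInterval lam i := by
  obtain ⟨i, hi, hle, hlt⟩ := Nat.exists_lt_not_and_succ (p := (x < partialSum lam ·))
    (by simp) (m := m) (by simpa using hx)
  exact ⟨⟨i, hi⟩, mem_Ico.mpr ⟨not_lt.mp hle, hlt⟩⟩

theorem exists_mem_colInterval {x : ℕ} (hx : x < ∑ k, mu k) : ∃ j, x ∈ colInterval mu j := by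
  obtain ⟨j, hj, hlt, hle⟩ := Nat.exists_lt_not_and_succ (p := (tailSum mu · ≤ x))
    (by simpa using hx) (m := n) (by simp)
  exact ⟨⟨j, hj⟩, mem_Ico.mpr ⟨hle, not_le.mp hlt⟩⟩

def canonicalMatrix : Matrix (Fin m) (Fin n) ℕ :=
  fun i j => #(rowInterval lam i ∩ colInterval mu j)

theorem canonicalMatrix_row_sum (h : ∑ k, lam k = ∑ k, mu k) (i : Fin m) :
    ∑ j, canonicalMatrix lam mu i j = lam i := by
  simp only [canonicalMatrix]
  rw [sum_card_inter_of_pairwise_disjoint (pairwise_disjoint_colInterval mu)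
    fun x hx => exists_mem_colInterval mu (h ▸ lt_sum_of_mem_rowInterval lam hx),
    card_rowInterval]

theorem canonicalMatrix_col_sum (h : ∑ k, lam k = ∑ k, mu k) (j : Fin n) :
    ∑ i, canonicalMatrix lam mu i j = mu j := by
  simp_rw [canonicalMatrix, inter_comm (rowInterval lam _)]
  rw [sum_card_inter_of_pairwise_disjoint (pairwise_disjoint_rowInterval lam)
    fun x hx => exists_mem_rowInterval lam (h ▸ lt_sum_of_mem_colInterval mu hx),
    card_colInterval]

theorem canonicalMatrix_generic (lam mu : Fin n → ℕ) : Generic (canonicalMatrix lam mu) := by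
  intro i k j l hik hjl
  by_contra! hne
  obtain ⟨x, hx⟩ := card_ne_zero.mp hne.1
  obtain ⟨y, hy⟩ := card_ne_zero.mp hne.2
  have := partialSum_mono lam (show (i : ℕ) + 1 ≤ k from hik)
  have := tailSum_anti mu (show (j : ℕ) + 1 ≤ l from hjl)
  simp only [rowInterval, colInterval, mem_inter, mem_Ico] at hx hy
  omega

end CanonicalMatrix

section CornerSums

variable {m n : ℕ} {lam : Fin m → ℕ} {mu : Fin n → ℕ}

def cornerSum (A : Matrix (Fin m) (Fin n) ℕ) (i j : ℕ) : ℕ :=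
  partialSum (fun k => tailSum (A k) j) i

theorem cornerSum_eq_tailSum_partialSum (A : Matrix (Fin m) (Fin n) ℕ) (i j : ℕ) :
    cornerSum A i j = tailSum (fun l => partialSum (fun k => A k l) i) j := by
  simp only [cornerSum, partialSum, tailSum, ite_sum_zero]
  rw [sum_comm]
  exact sum_congr rfl fun l _ => sum_congr rfl fun k _ => by split_ifs <;> rfl

theorem cornerSum_succ_add_cornerSum_succ (A : Matrix (Fin m) (Fin n) ℕ) (i : Fin m) (j : Fin n) :
    cornerSum A (i + 1) j + cornerSum A i (j + 1)
      = cornerSum A i j + cornerSum A (i + 1) (j + 1) + A i j := by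
  simp only [cornerSum, partialSum_succ]
  have := tailSum_eq_add_tailSum_succ (A i) j
  omega

theorem Matrix.ext_of_cornerSum {A B : Matrix (Fin m) (Fin n) ℕ}
    (h : ∀ i j, cornerSum A i j = cornerSum B i j) : A = B := by
  ext i j
  have hA := cornerSum_succ_add_cornerSum_succ A i j
  have hB := cornerSum_succ_add_cornerSum_succ B i j
  simp only [h] at hA
  omega

theorem cornerSum_le_partialSum {A : Matrix (Fin m) (Fin n) ℕ} (hrow : ∀ i, ∑ j, A i j = lam i)
    (i j : ℕ) : cornerSum A i j ≤ partialSum lam i :=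
  partialSum_le_partialSum (fun k => (hrow k).subst (tailSum_le_sum j)) i

theorem cornerSum_le_tailSum {A : Matrix (Fin m) (Fin n) ℕ} (hcol : ∀ j, ∑ i, A i j = mu j)
    (i j : ℕ) : cornerSum A i j ≤ tailSum mu j :=
  cornerSum_eq_tailSum_partialSum A i j ▸
    tailSum_le_tailSum (fun l => (hcol l).subst (partialSum_le_sum i)) j

theorem cornerSum_eq_partialSum {A : Matrix (Fin m) (Fin n) ℕ} (hrow : ∀ i, ∑ j, A i j = lam i)
    {i j : ℕ} (hA : ∀ (k : Fin m) (l : Fin n), (k : ℕ) < i → (l : ℕ) < j → A k l = 0) :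
    cornerSum A i j = partialSum lam i :=
  partialSum_congr fun k hk => (tailSum_eq_sum fun l hl => hA k l hk hl).trans (hrow k)

theorem cornerSum_eq_tailSum {A : Matrix (Fin m) (Fin n) ℕ} (hcol : ∀ j, ∑ i, A i j = mu j)
    {i j : ℕ} (hA : ∀ (k : Fin m) (l : Fin n), i ≤ (k : ℕ) → j ≤ (l : ℕ) → A k l = 0) :
    cornerSum A i j = tailSum mu j :=
  (cornerSum_eq_tailSum_partialSum A i j).trans <|
    tailSum_congr fun l hl => (partialSum_eq_sum fun k hk => hA k l hk hl).trans (hcol l)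

end CornerSums

section Generic

variable {n : ℕ} {lam mu : Fin n → ℕ} {A B : Matrix (Fin n) (Fin n) ℕ}

theorem Generic.cornerSum_eq_min (hA : Generic A) (hrow : ∀ i, ∑ j, A i j = lam i)
    (hcol : ∀ j, ∑ i, A i j = mu j) (i j : ℕ) :
    cornerSum A i j = min (partialSum lam i) (tailSum mu j) := by
  have hL := cornerSum_le_partialSum hrow i j
  have hM := cornerSum_le_tailSum hcol i j
  by_cases hUL : ∀ k l : Fin n, (k : ℕ) < i → (l : ℕ) < j → A k l = 0
  · have := cornerSum_eq_partialSum hrow hUL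
    omega
  · push Not at hUL
    obtain ⟨k, l, hk, hl, hkl⟩ := hUL
    have := cornerSum_eq_tailSum hcol (i := i) (j := j) fun k' l' hk' hl' =>
      (hA k k' l l' (by omega) (by omega)).resolve_left hkl
    omega

theorem Generic.eq_of_row_col_sums (hA : Generic A) (hB : Generic B)
    (hrowA : ∀ i, ∑ j, A i j = lam i) (hcolA : ∀ j, ∑ i, A i j = mu j) (hrowB : ∀ i, ∑ j, B i j = lam i)
    (hcolB : ∀ j, ∑ i, B i j = mu j) : A = B :=
  Matrix.ext_of_cornerSum fun i j => by
    rw [hA.cornerSum_eq_min hrowA hcolA, hB.cornerSum_eq_min hrowB hcolB]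

end Generic

theorem stmt5 {n r : ℕ} (lam mu : Fin n → ℕ)
    (h1 : ∑ i, lam i = r) (h2 : ∑ i, mu i = r) :
    ∃! A : Matrix (Fin n) (Fin n) ℕ,
      Generic A ∧ (∀ i, ∑ j, A i j = lam i) ∧ (∀ i, ∑ j, A j i = mu i) := by
  have htot : ∑ i, lam i = ∑ i, mu i := h1.trans h2.symm
  refine ⟨canonicalMatrix lam mu, ⟨canonicalMatrix_generic lam mu,
    canonicalMatrix_row_sum lam mu htot, canonicalMatrix_col_sum lam mu htot⟩, ?_⟩
  rintro A ⟨hA, hrow, hcol⟩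
  exact hA.eq_of_row_col_sums (canonicalMatrix_generic lam mu) hrow hcol
    (canonicalMatrix_row_sum lam mu htot) (canonicalMatrix_col_sum lam mu htot)
end

section
/- Let A be an n×n matrix over ℕ whose row-sum vector equals its column-sum vector. If A is both generic (every 2×2 submatrix has a zero main-diagonal entry) and anti-generic (every 2×2 submatrix has a zero anti-diagonal entry), then A is a diagonal matrix. -/
/-!
A generic and anti-generic matrix has no two nonzero entries in "general position": any two of
them share a row or a column. If `A i j ≠ 0` with `i ≠ j`, the balance of row and column `j`
forces a nonzero entry in row `j`, which must be `A j j`. Then every nonzero entry of column `i`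
would have to lie in row `j` (to meet `A j j`) and in row `i` (to meet `A i j`), so column `i`,
hence row `i`, sums to zero, contradicting `A i j ≠ 0`.
-/

open Finset

def AntiGeneric {n : ℕ} (A : Matrix (Fin n) (Fin n) ℕ) : Prop :=
  ∀ i k j l : Fin n, i < k → j < l → A i l = 0 ∨ A k j = 0

section

variable {n : ℕ} {A : Matrix (Fin n) (Fin n) ℕ}

lemma eq_zero_or_eq_zero_of_lt_of_ne (hg : Generic A) (hag : AntiGeneric A) {i k j l : Fin n}
    (hik : i < k) (hjl : j ≠ l) : A i j = 0 ∨ A k l = 0 := by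
  rcases hjl.lt_or_gt with hjl | hlj
  · exact hg i k j l hik hjl
  · exact hag i k l j hik hlj

lemma eq_or_eq_of_ne_zero_of_ne_zero (hg : Generic A) (hag : AntiGeneric A) {a b c d : Fin n}
    (hab : A a b ≠ 0) (hcd : A c d ≠ 0) : a = c ∨ b = d := by
  by_contra! ⟨hac, hbd⟩
  rcases hac.lt_or_gt with hac | hca
  · exact (eq_zero_or_eq_zero_of_lt_of_ne hg hag hac hbd).elim hab hcd
  · exact (eq_zero_or_eq_zero_of_lt_of_ne hg hag hca hbd.symm).elim hcd hab

end

theorem Matrix.eq_zero_of_ne_of_rowSum_eq_colSum {ι M : Type*} [Fintype ι]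
    [AddCommMonoid M] [PartialOrder M] [CanonicallyOrderedAdd M] (A : Matrix ι ι M)
    (h : ∀ i, ∑ j, A i j = ∑ j, A j i)
    (hA : ∀ a b c d, A a b ≠ 0 → A c d ≠ 0 → a = c ∨ b = d) {i j : ι} (hij : i ≠ j) :
    A i j = 0 := by
  by_contra hAij
  have hjj : A j j ≠ 0 := by
    have hrow : ∑ k, A j k ≠ 0 := by
      rw [h j]
      exact fun h0 ↦ hAij (sum_eq_zero_iff.mp h0 i (mem_univ i))
    obtain ⟨k, -, hjk⟩ := exists_ne_zero_of_sum_ne_zero hrow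
    obtain rfl : k = j := (hA j k i j hjk hAij).resolve_left hij.symm
    exact hjk
  have hcol : ∑ x, A x i = 0 := by
    refine sum_eq_zero fun x _ ↦ ?_
    by_contra hxi
    have hxj : x = j := (hA x i j j hxi hjj).resolve_right hij
    have hxi' : x = i := (hA x i i j hxi hAij).resolve_right hij
    exact hij (hxi'.symm.trans hxj)
  rw [← h i] at hcol
  exact hAij (sum_eq_zero_iff.mp hcol j (mem_univ j))

theorem stmt7 {n : ℕ} (A : Matrix (Fin n) (Fin n) ℕ)
    (h : ∀ i, ∑ j, A i j = ∑ j, A j i)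
    (hg : Generic A) (hag : AntiGeneric A) :
    ∀ i j, i ≠ j → A i j = 0 := fun _ _ ↦
  A.eq_zero_of_ne_of_rowSum_eq_colSum h fun _ _ _ _ ↦ eq_or_eq_of_ne_zero_of_ne_zero hg hag
end

section
/- The number of n×n matrices with entries in ℕ whose entries sum to r and which have at least one zero diagonal entry equals Σ_{s=1}^{n} C(n, s) · C(n² + r − n − 1, r + s − n), where C denotes the binomial coefficient (interpreted as 0 when the lower argument is negative). Equivalently, for each s, the number of such matrices with exactly s zero diagonal entries is C(n,s) · C(n² + r − n − 1, r + s − n). -/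
/-!
A matrix with entry sum `r` is a function on the `n²` positions with sum `r`. Once the set `D` of
its `s` zero diagonal entries is fixed (`C(n, s)` choices), the other `n - s` diagonal entries are
positive; subtracting `1` from each of them leaves an arbitrary function on the `n² - s` positions
outside `D` with sum `r - (n - s)`, and stars and bars counts these as
`C(n² + r - n - 1, r + s - n)`.
-/

open Finset

namespace Finset

variable {ι : Type*} [DecidableEq ι]

lemma card_piAntidiag_nat (s : Finset ι) (n : ℕ) :
    #(piAntidiag s n) = (#s + n - 1).choose n := by
  rw [← card_finsuppAntidiag_nat_eq_choose, finsuppAntidiag, card_map, card_attach]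

lemma filter_piAntidiag_forall_eq_zero {μ : Type*} [AddCommMonoid μ] [HasAntidiagonal μ]
    [DecidableEq μ] (s Z : Finset ι) (n : μ) :
    {f ∈ piAntidiag s n | ∀ i ∈ Z, f i = 0} = piAntidiag (s \ Z) n := by
  ext f
  simp only [mem_filter, mem_piAntidiag, mem_sdiff]
  constructor
  · rintro ⟨⟨rfl, hsupp⟩, hZ⟩
    refine ⟨sum_subset sdiff_subset fun i hi hi' => hZ i ?_, fun i hi => ⟨hsupp i hi, ?_⟩⟩
    · simpa [hi] using hi'
    · exact fun hiZ => hi (hZ i hiZ)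
  · rintro ⟨rfl, hsupp⟩
    refine ⟨⟨(sum_subset sdiff_subset fun i _ hi' => ?_).symm, fun i hi => (hsupp i hi).1⟩,
      fun i hi => ?_⟩
    · by_contra hfi
      exact hi' (mem_sdiff.2 (hsupp i hfi))
    · by_contra hfi
      exact (hsupp i hfi).2 hi

lemma card_filter_piAntidiag_add_card_forall_ne_zero {s P : Finset ι} (hP : P ⊆ s) (n : ℕ) :
    #{f ∈ piAntidiag s (n + #P) | ∀ i ∈ P, f i ≠ 0} = #(piAntidiag s n) := by
  set δ : ι → ℕ := fun i => if i ∈ P then 1 else 0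
  have hδ_sum : ∑ i ∈ s, δ i = #P := by
    rw [sum_boole, filter_mem_eq_inter, inter_eq_right.2 hP, Nat.cast_id]
  have hδ_supp : ∀ i, δ i ≠ 0 → i ∈ s := fun i hi => hP (by simpa [δ] using hi)
  have hδ_le : ∀ f ∈ {f ∈ piAntidiag s (n + #P) | ∀ i ∈ P, f i ≠ 0}, δ ≤ f := by
    intro f hf i
    by_cases hi : i ∈ P
    · simpa [δ, hi, Nat.one_le_iff_ne_zero] using (mem_filter.1 hf).2 i hi
    · simp [δ, hi]
  symm
  refine card_nbij' (· + δ) (· - δ) (fun g hg => ?_) (fun f hf => ?_)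
    (fun g _ => add_tsub_cancel_right g δ) (fun f hf => tsub_add_cancel_of_le (hδ_le f hf))
  · obtain ⟨hgs, hgsupp⟩ := mem_piAntidiag.1 hg
    refine mem_filter.2 ⟨mem_piAntidiag.2 ⟨?_, fun i hi => ?_⟩, fun i hi => by simp [δ, hi]⟩
    · change ∑ i ∈ s, (g i + δ i) = n + #P
      rw [sum_add_distrib, hgs, hδ_sum]
    · by_cases hgi : g i = 0
      · exact hδ_supp i (by simpa [hgi] using hi)
      · exact hgsupp i hgi
  · obtain ⟨hfs, hfsupp⟩ := mem_piAntidiag.1 (mem_filter.1 hf).1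
    have hsum : ∑ i ∈ s, (f i - δ i) + ∑ i ∈ s, δ i = s.sum f := by
      rw [← sum_add_distrib]
      exact sum_congr rfl fun i _ => tsub_add_cancel_of_le (hδ_le f hf i)
    refine mem_piAntidiag.2 ⟨show ∑ i ∈ s, (f i - δ i) = n by omega, fun i hi => ?_⟩
    exact hfsupp i fun hfi => hi (by simp [hfi])

lemma filter_piAntidiag_forall_ne_zero_eq_empty {s P : Finset ι} (hP : P ⊆ s) {n : ℕ}
    (hn : n < #P) : {f ∈ piAntidiag s n | ∀ i ∈ P, f i ≠ 0} = ∅ := by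
  refine filter_eq_empty_iff.2 fun f hf hfP => hn.not_ge ?_
  calc #P = ∑ _i ∈ P, 1 := (card_eq_sum_ones P)
    _ ≤ ∑ i ∈ P, f i := sum_le_sum fun i hi => Nat.one_le_iff_ne_zero.2 (hfP i hi)
    _ ≤ ∑ i ∈ s, f i := sum_le_sum_of_subset hP
    _ = n := (mem_piAntidiag.1 hf).1

lemma card_filter_piAntidiag_forall_ne_zero {s P : Finset ι} (hP : P ⊆ s) (n : ℕ) :
    #{f ∈ piAntidiag s n | ∀ i ∈ P, f i ≠ 0}
      = if #P ≤ n then (#s + (n - #P) - 1).choose (n - #P) else 0 := by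
  split_ifs with hn
  · rw [← card_piAntidiag_nat, ← card_filter_piAntidiag_add_card_forall_ne_zero hP,
      Nat.sub_add_cancel hn]
  · rw [filter_piAntidiag_forall_ne_zero_eq_empty hP (not_le.1 hn), card_empty]

variable {κ : Type*} [Fintype κ]

lemma card_filter_exists_eq_sum_card_filter_card {α : Type*} (T : Finset α) (p : α → κ → Prop)
    [∀ x, DecidablePred (p x)] [DecidablePred fun x => ∃ j, p x j] :
    #{x ∈ T | ∃ j, p x j} = ∑ s ∈ Icc 1 (Fintype.card κ), #{x ∈ T | #(univ.filter (p x)) = s} := by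
  have hmaps : ∀ x ∈ {x ∈ T | ∃ j, p x j}, #(univ.filter (p x)) ∈ Icc 1 (Fintype.card κ) := by
    intro x hx
    obtain ⟨j, hj⟩ := (mem_filter.1 hx).2
    exact mem_Icc.2 ⟨card_pos.2 ⟨j, mem_filter.2 ⟨mem_univ j, hj⟩⟩, card_le_univ _⟩
  rw [card_eq_sum_card_fiberwise hmaps]
  refine sum_congr rfl fun s hs => congrArg card ?_
  rw [filter_filter]
  refine filter_congr fun x _ => ⟨And.right, fun h => ⟨?_, h⟩⟩
  obtain ⟨j, hj⟩ := card_pos.1 (h ▸ (mem_Icc.1 hs).1)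
  exact ⟨j, (mem_filter.1 hj).2⟩

variable [DecidableEq κ] [Fintype ι]

lemma card_filter_piAntidiag_univ_zeros_eq (e : κ ↪ ι) (k : ℕ) (D : Finset κ) :
    #{f ∈ piAntidiag (univ : Finset ι) k | univ.filter (fun j => f (e j) = 0) = D}
      = if Fintype.card κ ≤ k + #D then
          (Fintype.card ι + k - Fintype.card κ - 1).choose (k + #D - Fintype.card κ) else 0 := by
  have hfilter : {f ∈ piAntidiag (univ : Finset ι) k | univ.filter (fun j => f (e j) = 0) = D}
      = {f ∈ piAntidiag (univ \ D.map e) k | ∀ i ∈ Dᶜ.map e, f i ≠ 0} := by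
    ext f
    simp only [← filter_piAntidiag_forall_eq_zero, Finset.ext_iff, mem_filter, mem_univ, true_and,
      forall_mem_map, mem_compl]
    rw [and_assoc]
    refine and_congr_right fun _ =>
      ⟨fun h => ⟨fun j hj => (h j).2 hj, fun j hj h0 => hj ((h j).1 h0)⟩,
        fun h j => ⟨fun h0 => by_contra fun hj => h.2 j hj h0, h.1 j⟩⟩
  have hsub : Dᶜ.map e ⊆ univ \ D.map e := by simp [subset_iff]
  have hD := card_le_univ D
  have hκ := Fintype.card_le_of_embedding e
  rw [hfilter]
  convert card_filter_piAntidiag_forall_ne_zero hsub k using 1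
  -- the two filters differ only in their `Decidable` instances
  · exact (congrArg card (filter_congr_decidable _ _ _)).symm
  rw [card_univ_sdiff, card_map, card_map, card_compl]
  split_ifs <;> first | omega | congr 1 <;> omega

lemma card_filter_piAntidiag_univ_card_zeros_eq (e : κ ↪ ι) (k s : ℕ) :
    #{f ∈ piAntidiag (univ : Finset ι) k | #(univ.filter fun j => f (e j) = 0) = s}
      = (Fintype.card κ).choose s * if Fintype.card κ ≤ k + s then
          (Fintype.card ι + k - Fintype.card κ - 1).choose (k + s - Fintype.card κ) else 0 := by
  have hmaps : ∀ f ∈ {f ∈ piAntidiag (univ : Finset ι) k | #(univ.filter fun j => f (e j) = 0) = s},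
      (univ.filter fun j => f (e j) = 0) ∈ powersetCard s univ :=
    fun f hf => mem_powersetCard_univ.2 (mem_filter.1 hf).2
  rw [card_eq_sum_card_fiberwise hmaps]
  have hfiber : ∀ D ∈ powersetCard s (univ : Finset κ),
      #{f ∈ {f ∈ piAntidiag (univ : Finset ι) k | #(univ.filter fun j => f (e j) = 0) = s} |
          univ.filter (fun j => f (e j) = 0) = D}
        = if Fintype.card κ ≤ k + s then
            (Fintype.card ι + k - Fintype.card κ - 1).choose (k + s - Fintype.card κ) else 0 := by
    intro D hD
    rw [filter_filter, ← mem_powersetCard_univ.1 hD, ← card_filter_piAntidiag_univ_zeros_eq]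
    refine congrArg card (filter_congr fun f _ => ?_)
    exact ⟨And.right, fun h => ⟨congrArg card h, h⟩⟩
  rw [sum_congr rfl hfiber, sum_const, card_powersetCard, card_univ, smul_eq_mul]

end Finset

lemma Matrix.ncard_setOf_sum_eq_and {m n : Type*} [Fintype m] [Fintype n] [DecidableEq m]
    [DecidableEq n] (r : ℕ) (q : (m × n → ℕ) → Prop) [DecidablePred q] :
    {A : Matrix m n ℕ | ∑ i, ∑ j, A i j = r ∧ q fun x => A x.1 x.2}.ncard
      = #{f ∈ piAntidiag (univ : Finset (m × n)) r | q f} := by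
  rw [← Set.ncard_coe_finset, ← Set.ncard_image_of_injective _
    (Matrix.of.injective.comp Function.curry_injective)]
  congr 1
  ext A
  simp only [Set.mem_ofPred_eq, Set.mem_image, coe_filter, mem_piAntidiag, ne_eq, mem_univ,
    implies_true, and_true, Fintype.sum_prod_type]
  exact ⟨fun hA => ⟨fun x => A x.1 x.2, hA, rfl⟩, by rintro ⟨f, hf, rfl⟩; exact hf⟩

theorem stmt8 (n r : ℕ) :
    {A : Matrix (Fin n) (Fin n) ℕ | (∑ i, ∑ j, A i j) = r ∧ ∃ i, A i i = 0}.ncard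
      = ∑ s ∈ Finset.Icc 1 n, n.choose s *
          (if n ≤ r + s then (n ^ 2 + r - n - 1).choose (r + s - n) else 0) ∧
    ∀ s, 1 ≤ s → s ≤ n →
      {A : Matrix (Fin n) (Fin n) ℕ | (∑ i, ∑ j, A i j) = r ∧
          (Finset.univ.filter fun i => A i i = 0).card = s}.ncard
        = n.choose s *
            (if n ≤ r + s then (n ^ 2 + r - n - 1).choose (r + s - n) else 0) := by
  have hcount (s : ℕ) := card_filter_piAntidiag_univ_card_zeros_eq (ι := Fin n × Fin n)
    (⟨Function.diag, Function.diag_injective⟩ : Fin n ↪ Fin n × Fin n) r s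
  simp only [Fintype.card_prod, Fintype.card_fin, ← sq] at hcount
  refine ⟨?_, fun s _ _ => ?_⟩
  · rw [(Matrix.ncard_setOf_sum_eq_and r fun f => ∃ i, f (i, i) = 0),
      card_filter_exists_eq_sum_card_filter_card, Fintype.card_fin]
    exact sum_congr rfl fun s _ => hcount s
  · exact (Matrix.ncard_setOf_sum_eq_and r fun f => #(univ.filter fun i => f (i, i) = 0) = s).trans
      (hcount s)
end

section
/- Let λ ∈ ℕ^n and let A be an n×n matrix over ℕ with ro(A) = co(A) = λ. Suppose there exist indices i, s, j with i < s ≤ j (or j < i < s) such that a_{ij} ≠ 0 and a_{s,j+1} ≠ 0. Let B be the n×n matrix with b_{j,j+1} = b_{j+1,j} = 1, all other off-diagonal entries zero, and diagonal entries chosen so that ro(B) = co(B) = λ (i.e., b_{jj} = λ_j − 1, b_{j+1,j+1} = λ_{j+1} − 1, and b_{tt} = λ_t otherwise). Then B_{NE,l,m} ≤ A_{NE,l,m} and B_{SW,l,m} ≤ A_{SW,l,m} for all l, m; that is, A degenerates to B, and moreover B ≠ the diagonal matrix with diagonal λ. -/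
open Finset

/-!
If all row and column sums of `A` equal `λ`, counting the rows `≤ l` against the columns `< m`
gives `NE_A(l, m) + ∑_{l < t < m} λ_t = ∑_{m ≤ t ≤ l} λ_t + (mass of A strictly south-west of (l, m))`.
Hence every north-east corner sum of `A` dominates that of `diag λ`, and
`NE_A(j, j+1) = SW_A(j+1, j)`. The matrix `B = diagonalWithSwap λ j (j+1)` arises from `diag λ` by moving one unit from each
of `(j, j)` and `(j+1, j+1)` to `(j, j+1)` and `(j+1, j)`; this lowers or keeps every north-east
corner sum except at `(j, j+1)`, where it becomes `1`, and the hypotheses put a nonzero entry of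
`A` in that corner or in the equal corner `SW(j+1, j)`. South-west corners follow by transposing,
since `B` is symmetric.
-/

namespace CornerSum

open scoped Matrix

variable {n : ℕ}

def regionSum (A : Matrix (Fin n) (Fin n) ℕ) (P : Fin n → Fin n → Prop)
    [∀ x y, Decidable (P x y)] : ℕ :=
  ∑ x, ∑ y, if P x y then A x y else 0

section regionSum

variable {A C : Matrix (Fin n) (Fin n) ℕ} {P Q : Fin n → Fin n → Prop}
  [∀ x y, Decidable (P x y)] [∀ x y, Decidable (Q x y)]

theorem NEf_eq_regionSum (l m : Fin n) :
    NEf A l m = regionSum A (fun x y => x ≤ l ∧ m ≤ y) := rfl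

theorem regionSum_congr (h : ∀ x y, P x y ↔ Q x y) : regionSum A P = regionSum A Q :=
  sum_congr rfl fun x _ => sum_congr rfl fun y _ => if_congr (h x y) rfl rfl

theorem regionSum_split (Q : Fin n → Fin n → Prop) [∀ x y, Decidable (Q x y)] :
    regionSum A P =
      regionSum A (fun x y => P x y ∧ Q x y) + regionSum A (fun x y => P x y ∧ ¬ Q x y) := by
  simp only [regionSum, ← sum_add_distrib]
  refine sum_congr rfl fun x _ => sum_congr rfl fun y _ => ?_
  by_cases hP : P x y <;> by_cases hQ : Q x y <;> simp [hP, hQ]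

theorem le_regionSum {x y : Fin n} (h : P x y) : A x y ≤ regionSum A P :=
  calc A x y = if P x y then A x y else 0 := (if_pos h).symm
    _ ≤ ∑ y', if P x y' then A x y' else 0 :=
      single_le_sum (f := fun y' => if P x y' then A x y' else 0) (by simp) (mem_univ y)
    _ ≤ regionSum A P :=
      single_le_sum (f := fun x' => ∑ y', if P x' y' then A x' y' else 0) (by simp) (mem_univ x)

theorem regionSum_add : regionSum (A + C) P = regionSum A P + regionSum C P := by
  simp only [regionSum, ← sum_add_distrib, Matrix.add_apply, ← ite_add_zero]

theorem regionSum_diagonal (d : Fin n → ℕ) :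
    regionSum (Matrix.diagonal d) P = ∑ t, if P t t then d t else 0 := by
  refine sum_congr rfl fun x _ => ?_
  rw [Fintype.sum_eq_single x fun y hy => by simp [Matrix.diagonal_apply_ne _ (Ne.symm hy)]]
  simp

theorem regionSum_single (a b : Fin n) (c : ℕ) :
    regionSum (Matrix.single a b c) P = if P a b then c else 0 := by
  rw [regionSum, Fintype.sum_eq_single a fun x hx => by simp [Matrix.single_apply_of_row_ne hx.symm]]
  rw [Fintype.sum_eq_single b fun y hy => by simp [Matrix.single_apply_of_col_ne _ _ hy.symm]]
  simp

end regionSum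

section Balanced

variable {lam : Fin n → ℕ} {A : Matrix (Fin n) (Fin n) ℕ}

theorem regionSum_rows (hro : ∀ i, ∑ y, A i y = lam i) (p : Fin n → Prop) [DecidablePred p] :
    regionSum A (fun x _ => p x) = ∑ t, if p t then lam t else 0 :=
  sum_congr rfl fun x _ => by by_cases h : p x <;> simp [h, hro x]

theorem regionSum_cols (hco : ∀ i, ∑ x, A x i = lam i) (q : Fin n → Prop) [DecidablePred q] :
    regionSum A (fun _ y => q y) = ∑ t, if q t then lam t else 0 := by
  rw [regionSum, sum_comm]
  exact sum_congr rfl fun y _ => by by_cases h : q y <;> simp [h, hco y]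

theorem NEf_add_sum_between (hro : ∀ i, ∑ y, A i y = lam i) (hco : ∀ i, ∑ x, A x i = lam i)
    (l m : Fin n) :
    NEf A l m + ∑ t, (if l < t ∧ t < m then lam t else 0) =
      (∑ t, if t ≤ l ∧ m ≤ t then lam t else 0) + regionSum A (fun x y => l < x ∧ y < m) := by
  have rows := regionSum_split (A := A) (P := fun x _ => x ≤ l) (fun _ y => m ≤ y)
  have cols := regionSum_split (A := A) (P := fun _ y => y < m) (fun x _ => x ≤ l)
  rw [regionSum_rows hro] at rows
  rw [regionSum_cols hco] at cols
  have hmid : regionSum A (fun x y => x ≤ l ∧ ¬ m ≤ y) = regionSum A (fun x y => y < m ∧ x ≤ l) :=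
    regionSum_congr fun x y => by rw [not_le, and_comm]
  have hlow : regionSum A (fun x y => y < m ∧ ¬ x ≤ l) = regionSum A (fun x y => l < x ∧ y < m) :=
    regionSum_congr fun x y => by rw [not_le, and_comm]
  have hlam : (∑ t, if t ≤ l then lam t else 0) + ∑ t, (if l < t ∧ t < m then lam t else 0) =
      (∑ t, if t < m then lam t else 0) + ∑ t, if t ≤ l ∧ m ≤ t then lam t else 0 := by
    simp only [← sum_add_distrib]
    refine sum_congr rfl fun t _ => ?_
    simp only [Fin.le_def, Fin.lt_def]
    split_ifs <;> omega
  rw [NEf_eq_regionSum]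
  omega

theorem NEf_diagonal_le (hro : ∀ i, ∑ y, A i y = lam i) (hco : ∀ i, ∑ x, A x i = lam i)
    (l m : Fin n) : NEf (Matrix.diagonal lam) l m ≤ NEf A l m := by
  rw [NEf_eq_regionSum (A := Matrix.diagonal lam), regionSum_diagonal]
  have h := NEf_add_sum_between hro hco l m
  by_cases hml : m ≤ l
  · have : ∑ t, (if l < t ∧ t < m then lam t else 0) = 0 :=
      sum_eq_zero fun t _ => if_neg fun ht => absurd (ht.1.trans ht.2) (not_lt.2 hml)
    omega
  · have : ∑ t, (if t ≤ l ∧ m ≤ t then lam t else 0) = 0 :=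
      sum_eq_zero fun t _ => if_neg fun ht => hml (ht.2.trans ht.1)
    omega

theorem NEf_eq_SWf_of_succ (hro : ∀ i, ∑ y, A i y = lam i) (hco : ∀ i, ∑ x, A x i = lam i)
    {j j' : Fin n} (hj' : (j' : ℕ) = j + 1) : NEf A j j' = SWf A j' j := by
  have h := NEf_add_sum_between hro hco j j'
  have hD : ∑ t, (if t ≤ j ∧ j' ≤ t then lam t else 0) = 0 :=
    sum_eq_zero fun t _ => if_neg fun ht => by simp only [Fin.le_def] at ht; omega
  have hbetween : ∑ t, (if j < t ∧ t < j' then lam t else 0) = 0 :=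
    sum_eq_zero fun t _ => if_neg fun ht => by simp only [Fin.lt_def] at ht; omega
  have hSW : regionSum A (fun x y => j < x ∧ y < j') = SWf A j' j :=
    regionSum_congr fun x y => by simp only [Fin.le_def, Fin.lt_def]; omega
  omega

end Balanced

def diagonalWithSwap (lam : Fin n → ℕ) (j j' : Fin n) : Matrix (Fin n) (Fin n) ℕ :=
  fun x y =>
    if x = y then (if x = j ∨ x = j' then lam x - 1 else lam x)
    else if (x = j ∧ y = j') ∨ (x = j' ∧ y = j) then 1 else 0

section diagonalWithSwap

variable {lam : Fin n → ℕ} {j j' : Fin n}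

theorem diagonalWithSwap_add_single (hne : j ≠ j') (h1 : 1 ≤ lam j) (h2 : 1 ≤ lam j') :
    diagonalWithSwap lam j j' + Matrix.single j j 1 + Matrix.single j' j' 1 =
      Matrix.diagonal lam + Matrix.single j j' 1 + Matrix.single j' j 1 := by
  ext x y
  simp only [diagonalWithSwap, Matrix.add_apply, Matrix.diagonal_apply, Matrix.single_apply]
  by_cases hxy : x = y
  · subst hxy
    by_cases hj : x = j
    · subst hj; simp [hne, Ne.symm hne]; omega
    · by_cases hj' : x = j'
      · subst hj'; simp [hj, Ne.symm hj]; omega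
      · simp [hj, hj', Ne.symm hj, Ne.symm hj']
  · simp only [if_neg hxy]
    split_ifs <;> grind

theorem diagonalWithSwap_transpose : (diagonalWithSwap lam j j')ᵀ = diagonalWithSwap lam j j' := by
  ext x y
  simp only [Matrix.transpose_apply, diagonalWithSwap]
  by_cases hxy : x = y
  · subst hxy; rfl
  · simp only [if_neg hxy, if_neg (Ne.symm hxy)]
    exact if_congr (by tauto) rfl rfl

theorem SWf_eq_NEf_transpose (C : Matrix (Fin n) (Fin n) ℕ) (l m : Fin n) :
    SWf C l m = NEf Cᵀ m l := by
  rw [NEf, sum_comm, SWf]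
  exact sum_congr rfl fun x _ => sum_congr rfl fun y _ => if_congr and_comm rfl rfl

variable {A : Matrix (Fin n) (Fin n) ℕ}

theorem NEf_diagonalWithSwap_le (hro : ∀ i, ∑ y, A i y = lam i)
    (hco : ∀ i, ∑ x, A x i = lam i) (hj' : (j' : ℕ) = j + 1) (h1 : 1 ≤ lam j) (h2 : 1 ≤ lam j')
    (hone : 1 ≤ NEf A j j') (l m : Fin n) :
    NEf (diagonalWithSwap lam j j') l m ≤ NEf A l m := by
  have hne : j ≠ j' := fun h => by rw [h] at hj'; omega
  have key : NEf (diagonalWithSwap lam j j') l m + (if j ≤ l ∧ m ≤ j then 1 else 0) +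
      (if j' ≤ l ∧ m ≤ j' then 1 else 0) = NEf (Matrix.diagonal lam) l m +
      (if j ≤ l ∧ m ≤ j' then 1 else 0) + (if j' ≤ l ∧ m ≤ j then 1 else 0) := by
    simpa only [NEf_eq_regionSum, regionSum_add, regionSum_single] using
      congrArg (fun C => NEf C l m) (diagonalWithSwap_add_single hne h1 h2)
  by_cases hlm : l = j ∧ m = j'
  · obtain ⟨rfl, rfl⟩ := hlm
    have hzero : NEf (Matrix.diagonal lam) l m = 0 := by
      rw [NEf_eq_regionSum, regionSum_diagonal]
      exact sum_eq_zero fun t _ => if_neg fun ht => by simp only [Fin.le_def] at ht; omega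
    rw [hzero] at key
    simp only [Fin.le_def, hj'] at key
    split_ifs at key <;> omega
  · have hD := NEf_diagonal_le hro hco l m
    simp only [Fin.ext_iff] at hlm
    simp only [Fin.le_def, hj'] at key
    split_ifs at key <;> omega

theorem corner_sums_diagonalWithSwap_le (hro : ∀ i, ∑ y, A i y = lam i)
    (hco : ∀ i, ∑ x, A x i = lam i) (hj' : (j' : ℕ) = j + 1) (h1 : 1 ≤ lam j) (h2 : 1 ≤ lam j')
    (hone : 1 ≤ NEf A j j') (l m : Fin n) :
    NEf (diagonalWithSwap lam j j') l m ≤ NEf A l m ∧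
      SWf (diagonalWithSwap lam j j') l m ≤ SWf A l m := by
  refine ⟨NEf_diagonalWithSwap_le hro hco hj' h1 h2 hone l m, ?_⟩
  have honeT : 1 ≤ NEf Aᵀ j j' := by
    rwa [← SWf_eq_NEf_transpose, ← NEf_eq_SWf_of_succ hro hco hj']
  rw [SWf_eq_NEf_transpose, SWf_eq_NEf_transpose, diagonalWithSwap_transpose]
  exact NEf_diagonalWithSwap_le (A := Aᵀ) hco hro hj' h1 h2 honeT m l

end diagonalWithSwap

end CornerSum

open CornerSum

theorem stmt11 {n : ℕ} (lam : Fin n → ℕ) (A : Matrix (Fin n) (Fin n) ℕ)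
    (hro : ∀ i, ∑ y, A i y = lam i) (hco : ∀ i, ∑ x, A x i = lam i)
    (i s j : Fin n) (hj : (j : ℕ) + 1 < n)
    (hidx : (i < s ∧ s ≤ j) ∨ (j < i ∧ i < s))
    (hij : A i j ≠ 0) (hsj : A s ⟨(j : ℕ) + 1, hj⟩ ≠ 0) :
    ∀ B : Matrix (Fin n) (Fin n) ℕ,
      (B = fun x y =>
        if x = y then (if x = j ∨ x = (⟨(j : ℕ) + 1, hj⟩ : Fin n) then lam x - 1 else lam x)
        else if (x = j ∧ y = (⟨(j : ℕ) + 1, hj⟩ : Fin n)) ∨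
            (x = (⟨(j : ℕ) + 1, hj⟩ : Fin n) ∧ y = j) then 1 else 0) →
      (∀ l m : Fin n, NEf B l m ≤ NEf A l m ∧ SWf B l m ≤ SWf A l m) ∧
        B ≠ Matrix.diagonal lam := by
  intro B hB
  set j' : Fin n := ⟨j + 1, hj⟩
  replace hB : B = diagonalWithSwap lam j j' := hB
  subst hB
  have hlam : ∀ {x y}, A x y ≠ 0 → 1 ≤ lam y := fun {x y} h =>
    hco y ▸ (Nat.one_le_iff_ne_zero.2 h).trans (single_le_sum (f := (A · y)) (by simp) (mem_univ x))
  have hone : 1 ≤ NEf A j j' := by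
    rcases hidx with ⟨-, hsj'⟩ | ⟨hji, -⟩
    · exact (Nat.one_le_iff_ne_zero.2 hsj).trans (le_regionSum ⟨hsj', le_rfl⟩)
    · rw [NEf_eq_SWf_of_succ hro hco rfl]
      exact (Nat.one_le_iff_ne_zero.2 hij).trans (le_regionSum ⟨hji, le_rfl⟩)
  refine ⟨corner_sums_diagonalWithSwap_le hro hco rfl (hlam hij) (hlam hsj) hone, fun h => ?_⟩
  have hne : j ≠ j' := Fin.ne_of_val_ne (Nat.ne_add_one _)
  have hentry := congrFun (congrFun h j) j'
  simp [diagonalWithSwap, hne] at hentry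
end

section
/- Let n ≥ 1, and consider generic symmetric n×n matrices over ℕ with row-sum vector λ ∈ ℕ^n. For each composition m = (m_1,…,m_s) of n, there is exactly one such matrix that is block-diagonal with blocks of sizes m_1,…,m_s along the diagonal, each diagonal block being the unique generic matrix with the corresponding row- and column-sums given by the respective consecutive entries of λ. In particular, for every composition m of n there exists a generic symmetric matrix O(λ,m) over ℕ with ro(O(λ,m)) = co(O(λ,m)) = λ having this block structure. -/
/-!
Genericity pins down every north-west corner sum `F = ∑_{k ≤ i, l ≤ j} A k l`: with `X`, `Y`, `Z`
the sums over the other three quadrants, `F + X` and `F + Y` are partial row and column sums,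
`F + X + Y + Z` is the total `T`, and `F = 0` or `Z = 0`. Hence `F = (R_i + C_j - T)⁺`, and the
corner sums determine the matrix. A generic matrix with row sums `r` and column sums `c` exists:
cut `[0, T)` into consecutive intervals `I_i` of lengths `r i` in increasing order of `i` and into
intervals `J_j` of lengths `c j` in decreasing order of `j`, and take `#(I_i ∩ J_j)` as entries.
Doing this block by block gives the block-diagonal matrix; it is symmetric since its transpose
satisfies the same conditions.
-/

open Finset

theorem Fintype.sum_subtype_eq_sum {α M : Type*} [Fintype α] [AddCommMonoid M] {p : α → Prop}
    [DecidablePred p] {f : α → M} (hf : ∀ x, ¬p x → f x = 0) :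
    ∑ x : Subtype p, f x = ∑ x, f x := by
  rw [← sum_subtype {x | p x} (by simp) f]
  exact sum_filter_of_ne fun x _ hx => by_contra (hx ∘ hf x)

section CumulativeSums

variable {α M : Type*} [Fintype α] [LinearOrder α]

theorem Finset.sum_filter_le_eq_sum_filter_lt_add [AddCommMonoid M] (f : α → M) (i : α) :
    ∑ k with k ≤ i, f k = ∑ k with k < i, f k + f i := by
  have : ({k | k ≤ i} : Finset α) = cons i {k | k < i} (by simp) := by
    ext k
    simp [le_iff_lt_or_eq, or_comm]
  rw [this, sum_cons, add_comm]

theorem eq_of_forall_sum_filter_le_eq [AddCancelCommMonoid M] {f g : α → M}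
    (h : ∀ i, ∑ k with k ≤ i, f k = ∑ k with k ≤ i, g k) : f = g := by
  funext i
  induction i using WellFoundedLT.induction with
  | ind i ih =>
    have hlt : ∑ k with k < i, f k = ∑ k with k < i, g k :=
      sum_congr rfl fun k hk => ih k (mem_filter.mp hk).2
    have := h i
    rwa [sum_filter_le_eq_sum_filter_lt_add, sum_filter_le_eq_sum_filter_lt_add, hlt,
      add_left_cancel_iff] at this

end CumulativeSums

namespace Matrix

variable {α β R : Type*} [LinearOrder α] [LinearOrder β]

def IsGeneric [Zero R] (A : Matrix α β R) : Prop :=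
  ∀ i k j l, i < k → j < l → A i j = 0 ∨ A k l = 0

variable [Fintype α] [Fintype β]

def cornerSum [AddCommMonoid R] (A : Matrix α β R) (i : α) (j : β) : R :=
  ∑ k with k ≤ i, ∑ l with l ≤ j, A k l

theorem eq_of_cornerSum_eq [AddCancelCommMonoid R] {A B : Matrix α β R}
    (h : ∀ i j, A.cornerSum i j = B.cornerSum i j) : A = B := by
  have hrows : ∀ k j, ∑ l with l ≤ j, A k l = ∑ l with l ≤ j, B k l := fun k j =>
    congrFun (eq_of_forall_sum_filter_le_eq (h · j)) k
  funext k
  exact eq_of_forall_sum_filter_le_eq (hrows k)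

theorem IsGeneric.cornerSum_eq {A : Matrix α β ℕ} (hA : A.IsGeneric) {r : α → ℕ} {c : β → ℕ}
    (hrow : ∀ i, ∑ j, A i j = r i) (hcol : ∀ j, ∑ i, A i j = c j) (i : α) (j : β) :
    A.cornerSum i j = (∑ k with k ≤ i, r k + ∑ l with l ≤ j, c l) - ∑ k, r k := by
  have hrows (s : Finset α) :
      ∑ k ∈ s, ∑ l with l ≤ j, A k l + ∑ k ∈ s, ∑ l with ¬l ≤ j, A k l = ∑ k ∈ s, r k := by
    rw [← sum_add_distrib]
    exact sum_congr rfl fun k _ => (sum_filter_add_sum_filter_not _ _ _).trans (hrow k)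
  have hcols (t : Finset β) :
      ∑ k with k ≤ i, ∑ l ∈ t, A k l + ∑ k with ¬k ≤ i, ∑ l ∈ t, A k l = ∑ l ∈ t, c l := by
    rw [sum_comm (f := fun k l => A k l), sum_comm (f := fun k l => A k l), ← sum_add_distrib]
    exact sum_congr rfl fun l _ => (sum_filter_add_sum_filter_not _ _ _).trans (hcol l)
  have hfar : A.cornerSum i j ≠ 0 → ∑ k with ¬k ≤ i, ∑ l with ¬l ≤ j, A k l = 0 := by
    intro hF
    obtain ⟨k, hk, hkF⟩ := exists_ne_zero_of_sum_ne_zero hF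
    obtain ⟨l, hl, hkl⟩ := exists_ne_zero_of_sum_ne_zero hkF
    refine sum_eq_zero fun k' hk' => sum_eq_zero fun l' hl' => ?_
    simp only [mem_filter, mem_univ, true_and, not_le] at hk hl hk' hl'
    exact (hA k k' l l' (hk.trans_lt hk') (hl.trans_lt hl')).resolve_left hkl
  have hX := hrows {k | k ≤ i}
  have hZ := hrows {k | ¬k ≤ i}
  have hY := hcols {l | l ≤ j}
  have hT := sum_filter_add_sum_filter_not univ (· ≤ i) r
  unfold cornerSum at hfar ⊢
  omega

theorem IsGeneric.eq_of_sums {A B : Matrix α β ℕ} (hA : A.IsGeneric) (hB : B.IsGeneric)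
    {r : α → ℕ} {c : β → ℕ} (hArow : ∀ i, ∑ j, A i j = r i) (hAcol : ∀ j, ∑ i, A i j = c j)
    (hBrow : ∀ i, ∑ j, B i j = r i) (hBcol : ∀ j, ∑ i, B i j = c j) : A = B :=
  eq_of_cornerSum_eq fun i j => by
    rw [hA.cornerSum_eq hArow hAcol, hB.cornerSum_eq hBrow hBcol]

end Matrix

section CumInterval

variable {α : Type*} [Fintype α] [LinearOrder α] (r : α → ℕ)

def cumInterval (i : α) : Finset ℕ :=
  Ico (∑ k with k < i, r k) (∑ k with k ≤ i, r k)

theorem card_cumInterval (i : α) : #(cumInterval r i) = r i := by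
  rw [cumInterval, Nat.card_Ico, sum_filter_le_eq_sum_filter_lt_add, Nat.add_sub_cancel_left]

theorem cumInterval_subset_range (i : α) : cumInterval r i ⊆ range (∑ k, r k) := by
  intro s hs
  have : ∑ k with k ≤ i, r k ≤ ∑ k, r k := sum_le_sum_of_subset (filter_subset _ _)
  rw [mem_range]
  exact (mem_Ico.mp hs).2.trans_le this

theorem lt_of_mem_cumInterval {i k : α} (hik : i < k) {s t : ℕ} (hs : s ∈ cumInterval r i)
    (ht : t ∈ cumInterval r k) : s < t := by
  have : ∑ k' with k' ≤ i, r k' ≤ ∑ k' with k' < k, r k' :=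
    sum_le_sum_of_subset fun k' => by simpa using fun h => h.trans_lt hik
  exact (mem_Ico.mp hs).2.trans_le (this.trans (mem_Ico.mp ht).1)

theorem pairwiseDisjoint_cumInterval :
    (Set.univ : Set α).PairwiseDisjoint (cumInterval r) := by
  intro i _ k _ hik
  rw [Function.onFun, disjoint_left]
  intro s hsi hsk
  rcases hik.lt_or_gt with h | h
  · exact (lt_of_mem_cumInterval r h hsi hsk).false
  · exact (lt_of_mem_cumInterval r h hsk hsi).false

theorem biUnion_cumInterval : univ.biUnion (cumInterval r) = range (∑ k, r k) := by
  refine eq_of_subset_of_card_le (biUnion_subset.mpr fun i _ => cumInterval_subset_range r i) ?_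
  rw [card_biUnion (coe_univ (α := α) ▸ pairwiseDisjoint_cumInterval r), card_range]
  exact (sum_congr rfl fun i _ => card_cumInterval r i).ge

theorem sum_card_inter_cumInterval {s : Finset ℕ} (hs : s ⊆ range (∑ k, r k)) :
    ∑ i, #(s ∩ cumInterval r i) = #s := by
  rw [← card_biUnion, ← inter_biUnion, biUnion_cumInterval, inter_eq_left.mpr hs]
  exact fun i _ k _ hik => (pairwiseDisjoint_cumInterval r (by simp) (by simp) hik).mono
    inter_subset_right inter_subset_right

end CumInterval

namespace Matrix

open OrderDual

variable {α β : Type*} [Fintype α] [LinearOrder α] [Fintype β] [LinearOrder β]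

def genericMatrix (r : α → ℕ) (c : β → ℕ) : Matrix α β ℕ := fun i j =>
  #(cumInterval r i ∩ cumInterval (fun l : βᵒᵈ => c (ofDual l)) (toDual j))

variable (r : α → ℕ) (c : β → ℕ)

theorem isGeneric_genericMatrix : (genericMatrix r c).IsGeneric := by
  intro i k j l hik hjl
  refine or_iff_not_and_not.mpr fun ⟨hij, hkl⟩ => ?_
  obtain ⟨s, hs⟩ := card_ne_zero.mp hij
  obtain ⟨t, ht⟩ := card_ne_zero.mp hkl
  rw [mem_inter] at hs ht
  exact (lt_of_mem_cumInterval r hik hs.1 ht.1).asymm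
    (lt_of_mem_cumInterval (fun l : βᵒᵈ => c (ofDual l)) (toDual_lt_toDual.mpr hjl) ht.2 hs.2)

variable {r c}

theorem sum_genericMatrix_row (h : ∑ k, r k = ∑ l, c l) (i : α) :
    ∑ j, genericMatrix r c i j = r i := by
  rw [← card_cumInterval r i]
  exact sum_card_inter_cumInterval (fun l : βᵒᵈ => c (ofDual l))
    (h ▸ cumInterval_subset_range r i)

theorem sum_genericMatrix_col (h : ∑ k, r k = ∑ l, c l) (j : β) :
    ∑ i, genericMatrix r c i j = c j := by
  simp_rw [genericMatrix, inter_comm (cumInterval r _)]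
  exact (sum_card_inter_cumInterval r (h ▸ cumInterval_subset_range _ _)).trans
    (card_cumInterval _ _)

end Matrix

namespace Matrix

variable {α ι : Type*} [LinearOrder α] {blk : α → ι}

structure IsBlockGeneric {R : Type*} [Zero R] (blk : α → ι) (A : Matrix α α R) : Prop where
  eq_zero_of_ne : ∀ i j, blk i ≠ blk j → A i j = 0
  generic : ∀ i k j l : α, i < k → j < l → blk i = blk k → blk j = blk l → blk i = blk j →
    A i j = 0 ∨ A k l = 0

namespace IsBlockGeneric

section Zero

variable {R : Type*} [Zero R] {A : Matrix α α R}

theorem transpose (hA : IsBlockGeneric blk A) : IsBlockGeneric blk Aᵀ where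
  eq_zero_of_ne i j h := hA.eq_zero_of_ne j i (Ne.symm h)
  generic i k j l hik hjl hb hb' hb'' := hA.generic j l i k hjl hik hb' hb hb''.symm

theorem isGeneric_submatrix (hA : IsBlockGeneric blk A) (b : ι) :
    (A.submatrix (Subtype.val : {k // blk k = b} → α)
      (Subtype.val : {k // blk k = b} → α)).IsGeneric :=
  fun i k j l hik hjl => hA.generic i k j l hik hjl (i.2.trans k.2.symm) (j.2.trans l.2.symm)
    (i.2.trans j.2.symm)

end Zero

variable [Fintype α] [DecidableEq ι]

theorem sum_row_block {R : Type*} [AddCommMonoid R] {A : Matrix α α R}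
    (hA : IsBlockGeneric blk A) {b : ι} (i : {k // blk k = b}) :
    ∑ j : {k // blk k = b}, A i j = ∑ j, A i j :=
  Fintype.sum_subtype_eq_sum fun j hj => hA.eq_zero_of_ne i j (i.2.trans_ne (Ne.symm hj))

theorem sum_col_block {R : Type*} [AddCommMonoid R] {A : Matrix α α R}
    (hA : IsBlockGeneric blk A) {b : ι} (j : {k // blk k = b}) :
    ∑ i : {k // blk k = b}, A i j = ∑ i, A i j :=
  hA.transpose.sum_row_block j

theorem eq_of_sums {A B : Matrix α α ℕ} (hA : IsBlockGeneric blk A)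
    (hB : IsBlockGeneric blk B) {r c : α → ℕ} (hArow : ∀ i, ∑ j, A i j = r i)
    (hAcol : ∀ j, ∑ i, A i j = c j) (hBrow : ∀ i, ∑ j, B i j = r i)
    (hBcol : ∀ j, ∑ i, B i j = c j) : A = B := by
  ext i j
  by_cases hij : blk i = blk j
  · have hblock := (hA.isGeneric_submatrix (blk i)).eq_of_sums (hB.isGeneric_submatrix (blk i))
      (r := fun k => r k) (c := fun k => c k)
      (fun k => (hA.sum_row_block k).trans (hArow k))
      (fun k => (hA.sum_col_block k).trans (hAcol k))
      (fun k => (hB.sum_row_block k).trans (hBrow k))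
      (fun k => (hB.sum_col_block k).trans (hBcol k))
    exact congrFun₂ hblock ⟨i, rfl⟩ ⟨j, hij.symm⟩
  · rw [hA.eq_zero_of_ne i j hij, hB.eq_zero_of_ne i j hij]

theorem isSymm {A : Matrix α α ℕ} (hA : IsBlockGeneric blk A) {r : α → ℕ}
    (hrow : ∀ i, ∑ j, A i j = r i) (hcol : ∀ j, ∑ i, A i j = r j) : A.IsSymm :=
  hA.transpose.eq_of_sums hA hcol hrow hrow hcol

end IsBlockGeneric

variable [Fintype α] [DecidableEq ι]

def blockGenericMatrix (blk : α → ι) (r c : α → ℕ) : Matrix α α ℕ := fun i j =>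
  if h : blk j = blk i then
    genericMatrix (fun k : {k // blk k = blk i} => r k) (fun k : {k // blk k = blk i} => c k)
      ⟨i, rfl⟩ ⟨j, h⟩
  else 0

variable {r c : α → ℕ}

theorem blockGenericMatrix_apply_of_eq {b : ι} {i j : α} (hi : blk i = b) (hj : blk j = b) :
    blockGenericMatrix blk r c i j =
      genericMatrix (fun k : {k // blk k = b} => r k) (fun k : {k // blk k = b} => c k)
        ⟨i, hi⟩ ⟨j, hj⟩ := by
  subst hi
  simp [blockGenericMatrix, hj]

theorem blockGenericMatrix_apply_of_ne {i j : α} (h : blk i ≠ blk j) :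
    blockGenericMatrix blk r c i j = 0 :=
  dif_neg (Ne.symm h)

theorem isBlockGeneric_blockGenericMatrix :
    IsBlockGeneric blk (blockGenericMatrix blk r c) where
  eq_zero_of_ne _ _ := blockGenericMatrix_apply_of_ne
  generic i k j l hik hjl hik' hjl' hij := by
    rw [blockGenericMatrix_apply_of_eq rfl hij.symm,
      blockGenericMatrix_apply_of_eq hik'.symm (hjl'.symm.trans hij.symm)]
    exact isGeneric_genericMatrix (fun k : {k // blk k = blk i} => r k)
      (fun k : {k // blk k = blk i} => c k) ⟨i, rfl⟩ ⟨k, hik'.symm⟩ ⟨j, hij.symm⟩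
      ⟨l, hjl'.symm.trans hij.symm⟩ (Subtype.mk_lt_mk.mpr hik) (Subtype.mk_lt_mk.mpr hjl)

theorem sum_blockGenericMatrix_row
    (h : ∀ b, ∑ k : {k // blk k = b}, r k = ∑ k : {k // blk k = b}, c k) (i : α) :
    ∑ j, blockGenericMatrix blk r c i j = r i := by
  calc ∑ j, blockGenericMatrix blk r c i j
      = ∑ j : {k // blk k = blk i}, blockGenericMatrix blk r c i j :=
        (isBlockGeneric_blockGenericMatrix.sum_row_block ⟨i, rfl⟩).symm
    _ = ∑ j : {k // blk k = blk i}, genericMatrix (fun k : {k // blk k = blk i} => r k)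
          (fun k : {k // blk k = blk i} => c k) ⟨i, rfl⟩ j :=
        sum_congr rfl fun j _ => blockGenericMatrix_apply_of_eq rfl j.2
    _ = r i := sum_genericMatrix_row (h _) _

theorem sum_blockGenericMatrix_col
    (h : ∀ b, ∑ k : {k // blk k = b}, r k = ∑ k : {k // blk k = b}, c k) (j : α) :
    ∑ i, blockGenericMatrix blk r c i j = c j := by
  calc ∑ i, blockGenericMatrix blk r c i j
      = ∑ i : {k // blk k = blk j}, blockGenericMatrix blk r c i j :=
        (isBlockGeneric_blockGenericMatrix.sum_col_block ⟨j, rfl⟩).symm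
    _ = ∑ i : {k // blk k = blk j}, genericMatrix (fun k : {k // blk k = blk j} => r k)
          (fun k : {k // blk k = blk j} => c k) i ⟨j, rfl⟩ :=
        sum_congr rfl fun i _ => blockGenericMatrix_apply_of_eq i.2 rfl
    _ = c j := sum_genericMatrix_col (h _) _

end Matrix

theorem stmt16_general {n : ℕ} (lam : Fin n → ℕ) (m : Composition n) :
    ∃! A : Matrix (Fin n) (Fin n) ℕ,
      (∀ i j, A i j = A j i) ∧
      (∀ i, ∑ j, A i j = lam i) ∧ (∀ i, ∑ j, A j i = lam i) ∧
      (∀ i j, m.index i ≠ m.index j → A i j = 0) ∧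
      (∀ i k j l : Fin n, i < k → j < l →
        m.index i = m.index k → m.index j = m.index l → m.index i = m.index j →
        A i j = 0 ∨ A k l = 0) := by
  set O := Matrix.blockGenericMatrix m.index lam lam
  have hO : O.IsBlockGeneric m.index := Matrix.isBlockGeneric_blockGenericMatrix
  have hrow : ∀ i, ∑ j, O i j = lam i := Matrix.sum_blockGenericMatrix_row fun _ => rfl
  have hcol : ∀ j, ∑ i, O i j = lam j := Matrix.sum_blockGenericMatrix_col fun _ => rfl
  refine ⟨O, ⟨fun i j => (hO.isSymm hrow hcol).apply j i, hrow, hcol, hO.eq_zero_of_ne,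
    hO.generic⟩, ?_⟩
  rintro A ⟨-, hArow, hAcol, hAblk, hAgen⟩
  exact Matrix.IsBlockGeneric.eq_of_sums ⟨hAblk, hAgen⟩ hO hArow hAcol hrow hcol

theorem stmt16 {n : ℕ} (hn : 1 ≤ n) (lam : Fin n → ℕ) (m : Composition n) :
    ∃! A : Matrix (Fin n) (Fin n) ℕ,
      (∀ i j, A i j = A j i) ∧
      (∀ i, ∑ j, A i j = lam i) ∧ (∀ i, ∑ j, A j i = lam i) ∧
      (∀ i j, m.index i ≠ m.index j → A i j = 0) ∧
      (∀ i k j l : Fin n, i < k → j < l →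
        m.index i = m.index k → m.index j = m.index l → m.index i = m.index j →
        A i j = 0 ∨ A k l = 0) :=
  stmt16_general lam m
end
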